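/- For all z ≥ 0, (1-Φ(z))(2Φ(z)-1)/φ(z) ≤ 1/2, where φ and Φ are the standard normal density and distribution function. -/

import Mathlib

open MeasureTheory Real

/-- Standard normal density. -/
noncomputable def stdPhi (x : ℝ) : ℝ := Real.exp (-x^2/2) / Real.sqrt (2*Real.pi)

/-- Standard normal distribution function. -/
noncomputable def stdCDF (x : ℝ) : ℝ := ∫ t in Set.Iic x, stdPhi t

/-!
Write `Q = 1 - Φ`. The function `φ/2 - Q (1 - 2Q)` tends to `0` at infinity and has derivative
`φ (1 - z/2 - 4Q)`, so it is enough to show `Q z ≥ (2 - z)/8` for `z ≥ 0`. The difference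
`Q z - (2 - z)/8` has derivative `1/8 - φ z`, hence on `[0, ∞)` it is smallest at the point
`c = √(log (32/π))` where `φ c = 1/8`; there the claim follows from Birnbaum's bound
`Q z ≥ φ z (√(z² + 4) - z)/2`, itself proved by the same derivative-and-limit argument, because
`c ≥ 3/2`.
-/

open Filter Set Topology

lemma nonneg_of_hasDerivAt_nonpos_of_tendsto {f f' : ℝ → ℝ} {a : ℝ}
    (hf : ∀ x ∈ Ici a, HasDerivAt f (f' x) x) (hf' : ∀ x ∈ Ioi a, f' x ≤ 0)
    (hlim : Tendsto f atTop (𝓝 0)) : 0 ≤ f a := by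
  have hanti : AntitoneOn f (Ici a) := by
    refine antitoneOn_of_hasDerivWithinAt_nonpos (f' := f') (convex_Ici a)
      (fun x hx => (hf x hx).continuousAt.continuousWithinAt) (fun x hx => ?_) ?_
    · rw [interior_Ici] at hx
      exact (hf x (mem_Ici.2 hx.le)).hasDerivWithinAt
    · simpa only [interior_Ici] using hf'
  refine le_of_tendsto hlim ?_
  filter_upwards [eventually_ge_atTop a] with y hy
  exact hanti self_mem_Ici hy hy

lemma stdPhi_eq_gaussianPDFReal : stdPhi = ProbabilityTheory.gaussianPDFReal 0 1 := by
  ext x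
  simp [stdPhi, ProbabilityTheory.gaussianPDFReal, div_eq_inv_mul]

lemma continuous_stdPhi : Continuous stdPhi := by
  unfold stdPhi
  fun_prop

lemma stdPhi_pos (x : ℝ) : 0 < stdPhi x := by
  unfold stdPhi
  positivity

lemma integrable_stdPhi : Integrable stdPhi := by
  rw [stdPhi_eq_gaussianPDFReal]
  exact ProbabilityTheory.integrable_gaussianPDFReal 0 1

lemma integral_stdPhi : ∫ x, stdPhi x = 1 := by
  rw [stdPhi_eq_gaussianPDFReal]
  exact ProbabilityTheory.integral_gaussianPDFReal_eq_one 0 one_ne_zero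

lemma hasDerivAt_stdPhi (x : ℝ) : HasDerivAt stdPhi (-x * stdPhi x) x := by
  have h : HasDerivAt (fun y : ℝ => -y ^ 2 / 2) (-x) x :=
    ((hasDerivAt_pow 2 x).fun_neg.div_const 2).congr_deriv (by ring)
  exact (h.exp.div_const (√(2 * π))).congr_deriv (by simp only [stdPhi]; ring)

lemma tendsto_stdPhi_atTop : Tendsto stdPhi atTop (𝓝 0) := by
  have h : Tendsto (fun x : ℝ => -x ^ 2 / 2) atTop atBot :=
    (tendsto_neg_atTop_atBot.comp (tendsto_pow_atTop two_ne_zero)).atBot_div_const two_pos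
  exact (zero_div (√(2 * π))) ▸ (tendsto_exp_atBot.comp h).div_const (√(2 * π))

lemma stdPhi_le_stdPhi {x y : ℝ} (hx : 0 ≤ x) (hxy : x ≤ y) : stdPhi y ≤ stdPhi x := by
  unfold stdPhi
  gcongr

lemma hasDerivAt_stdCDF (x : ℝ) : HasDerivAt stdCDF (stdPhi x) x := by
  have hsplit : ∀ y, stdCDF y = stdCDF 0 + ∫ t in (0 : ℝ)..y, stdPhi t := fun y => by
    rw [← intervalIntegral.integral_Iic_sub_Iic integrable_stdPhi.integrableOn
      integrable_stdPhi.integrableOn, stdCDF, stdCDF]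
    ring
  rw [funext hsplit]
  exact ((continuous_stdPhi.integral_hasStrictDerivAt 0 x).hasDerivAt).const_add _

lemma tendsto_stdCDF_atTop : Tendsto stdCDF atTop (𝓝 1) := by
  have h := tendsto_setIntegral_of_monotone (μ := volume) (fun x : ℝ => measurableSet_Iic)
    (fun _ _ hxy => Iic_subset_Iic.2 hxy) integrable_stdPhi.integrableOn
  rwa [iUnion_Iic, setIntegral_univ, integral_stdPhi] at h

noncomputable def stdTail (z : ℝ) : ℝ := 1 - stdCDF z

lemma hasDerivAt_stdTail (x : ℝ) : HasDerivAt stdTail (-stdPhi x) x :=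
  (hasDerivAt_stdCDF x).const_sub 1

lemma tendsto_stdTail_atTop : Tendsto stdTail atTop (𝓝 0) :=
  sub_self (1 : ℝ) ▸ tendsto_stdCDF_atTop.const_sub 1

lemma mul_add_three_le_sqrt_mul_add_one (z : ℝ) :
    z * (z ^ 2 + 3) ≤ √(z ^ 2 + 4) * (z ^ 2 + 1) := by
  refine le_of_sq_le_sq ?_ (by positivity)
  rw [mul_pow, mul_pow, sq_sqrt (by positivity)]
  nlinarith

/-- Birnbaum's lower bound for the Gaussian tail. -/
lemma stdPhi_mul_le_stdTail (z : ℝ) : stdPhi z * ((√(z ^ 2 + 4) - z) / 2) ≤ stdTail z := by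
  set u : ℝ → ℝ := fun x => stdPhi x * ((√(x ^ 2 + 4) - x) / 2)
  have hS : ∀ x : ℝ, HasDerivAt (fun y => √(y ^ 2 + 4)) (x / √(x ^ 2 + 4)) x := fun x => by
    have := (((hasDerivAt_id x).fun_pow 2).add_const 4).sqrt (by positivity)
    exact this.congr_deriv (by simp only [Nat.cast_ofNat, id_eq, Nat.add_one_sub_one, pow_one, mul_one]; ring)
  have hu : ∀ x, HasDerivAt u (-x * stdPhi x * ((√(x ^ 2 + 4) - x) / 2)
      + stdPhi x * ((x / √(x ^ 2 + 4) - 1) / 2)) x := fun x =>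
    (hasDerivAt_stdPhi x).mul (((hS x).sub (hasDerivAt_id x)).div_const 2)
  have hu_tendsto : Tendsto u atTop (𝓝 0) := by
    refine tendsto_of_tendsto_of_tendsto_of_le_of_le' tendsto_const_nhds tendsto_stdPhi_atTop ?_ ?_
    all_goals filter_upwards [eventually_ge_atTop 0] with x hx
    · have : x ≤ √(x ^ 2 + 4) := Real.le_sqrt_of_sq_le (by linarith)
      exact mul_nonneg (stdPhi_pos x).le (by linarith)
    · have : √(x ^ 2 + 4) ≤ x + 2 := Real.sqrt_le_iff.2 ⟨by linarith, by nlinarith⟩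
      exact mul_le_of_le_one_right (stdPhi_pos x).le (by linarith)
  rw [← sub_nonneg]
  refine nonneg_of_hasDerivAt_nonpos_of_tendsto (f := fun x => stdTail x - u x)
    (fun x _ => (hasDerivAt_stdTail x).sub (hu x)) (fun x _ => ?_) ?_
  · have hSpos : 0 < √(x ^ 2 + 4) := by positivity
    have hS2 : √(x ^ 2 + 4) ^ 2 = x ^ 2 + 4 := sq_sqrt (by positivity)
    have hderiv : -stdPhi x - (-x * stdPhi x * ((√(x ^ 2 + 4) - x) / 2)
        + stdPhi x * ((x / √(x ^ 2 + 4) - 1) / 2))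
        = stdPhi x / (2 * √(x ^ 2 + 4)) * (x * (x ^ 2 + 3) - √(x ^ 2 + 4) * (x ^ 2 + 1)) := by
      field_simp
      linear_combination x * stdPhi x * hS2
    rw [hderiv]
    exact mul_nonpos_of_nonneg_of_nonpos (by positivity [stdPhi_pos x])
      (sub_nonpos.2 (mul_add_three_le_sqrt_mul_add_one x))
  · simpa only [sub_zero] using tendsto_stdTail_atTop.sub hu_tendsto

lemma exp_nine_quarters_lt_ten : exp (9 / 4) < 10 := by
  have h9 : exp (9 / 4) ^ 4 < 10 ^ 4 :=
    calc exp (9 / 4) ^ 4 = exp 1 ^ 9 := by rw [← exp_nat_mul, ← exp_nat_mul]; norm_num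
      _ < 2.7182818286 ^ 9 := by gcongr; exact exp_one_lt_d9
      _ < 10 ^ 4 := by norm_num
  exact lt_of_pow_lt_pow_left₀ 4 (by norm_num) h9

lemma stdPhi_sqrt_log : stdPhi √(log (32 / π)) = 1 / 8 := by
  have hL : 0 ≤ log (32 / π) := log_nonneg (by rw [le_div_iff₀ pi_pos]; linarith [pi_lt_four])
  have hexp : exp (-√(log (32 / π)) ^ 2 / 2) ^ 2 = π / 32 := by
    rw [sq_sqrt hL, ← exp_nat_mul, show ((2 : ℕ) : ℝ) * (-log (32 / π) / 2) = -log (32 / π) by ring,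
      exp_neg, exp_log (by positivity), inv_div]
  have hsq : stdPhi √(log (32 / π)) ^ 2 = (1 / 8) ^ 2 := by
    rw [stdPhi, div_pow, hexp, sq_sqrt (by positivity)]
    field_simp
    norm_num
  exact (pow_left_inj₀ (stdPhi_pos _).le (by norm_num) two_ne_zero).1 hsq

lemma three_halves_le_sqrt_log : 3 / 2 ≤ √(log (32 / π)) := by
  refine Real.le_sqrt_of_sq_le ((le_log_iff_exp_le (by positivity)).2 ?_)
  rw [le_div_iff₀ pi_pos]
  nlinarith [exp_nine_quarters_lt_ten, pi_lt_d2, exp_pos (9 / 4)]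

lemma two_sub_div_eight_le_stdTail {z : ℝ} (hz : 0 ≤ z) : (2 - z) / 8 ≤ stdTail z := by
  set c := √(log (32 / π))
  have hc : stdPhi c = 1 / 8 := stdPhi_sqrt_log
  have hc32 : 3 / 2 ≤ c := three_halves_le_sqrt_log
  have hD : ∀ x, HasDerivAt (fun y => stdTail y - (2 - y) / 8) (1 / 8 - stdPhi x) x := fun x =>
    ((hasDerivAt_stdTail x).sub (((hasDerivAt_id x).const_sub 2).div_const 8)).congr_deriv
      (by ring)
  have hmin : IsMinOn (fun y => stdTail y - (2 - y) / 8) (Ici 0) c := by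
    refine isMinOn_Ici_of_deriv (hD 0).continuousAt (hD c).continuousAt
      (fun x _ => (hD x).differentiableAt.differentiableWithinAt)
      (fun x _ => (hD x).differentiableAt.differentiableWithinAt) (fun x hx => ?_) (fun x hx => ?_)
    · rw [(hD x).deriv, sub_nonpos, ← hc]
      exact stdPhi_le_stdPhi hx.1.le hx.2.le
    · rw [(hD x).deriv, sub_nonneg, ← hc]
      exact stdPhi_le_stdPhi (by linarith) (le_of_lt hx)
  -- At `c` Birnbaum's bound reads `(√(c²+4) - c)/16 ≤ Q c`, which beats `(2 - c)/8` iff `c ≥ 3/2`.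
  have hc_nonneg : (2 - c) / 8 ≤ stdTail c := by
    have hB := stdPhi_mul_le_stdTail c
    have hS : 4 - c ≤ √(c ^ 2 + 4) := Real.le_sqrt_of_sq_le (by nlinarith)
    rw [hc] at hB
    linarith
  linarith [isMinOn_iff.1 hmin z hz]

lemma stdTail_mul_le {z : ℝ} (hz : 0 ≤ z) : stdTail z * (1 - 2 * stdTail z) ≤ stdPhi z / 2 := by
  rw [← sub_nonneg]
  refine nonneg_of_hasDerivAt_nonpos_of_tendsto
    (f := fun x => stdPhi x / 2 - stdTail x * (1 - 2 * stdTail x))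
    (fun x _ => ((hasDerivAt_stdPhi x).div_const 2).sub
      ((hasDerivAt_stdTail x).mul (((hasDerivAt_stdTail x).const_mul 2).const_sub 1)))
    (fun x hx => ?_) ?_
  · have hQ := two_sub_div_eight_le_stdTail (hz.trans (le_of_lt hx))
    have hderiv : -x * stdPhi x / 2 - (-stdPhi x * (1 - 2 * stdTail x)
        + stdTail x * -(2 * -stdPhi x)) = stdPhi x * (1 - x / 2 - 4 * stdTail x) := by ring
    rw [hderiv]
    exact mul_nonpos_of_nonneg_of_nonpos (stdPhi_pos x).le (by linarith)
  · simpa using (tendsto_stdPhi_atTop.div_const 2).sub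
      (tendsto_stdTail_atTop.mul ((tendsto_stdTail_atTop.const_mul 2).const_sub 1))

theorem stmt13 (z : ℝ) (hz : 0 ≤ z) :
    (1 - stdCDF z) * (2*stdCDF z - 1) / stdPhi z ≤ 1/2 := by
  rw [div_le_iff₀ (stdPhi_pos z)]
  have h := stdTail_mul_le hz
  rw [stdTail] at h
  linarith
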